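/- The product of two Hausdorff topological groups is an s-group if and only if both factors are s-groups. -/

import Mathlib

open Filter Topology Pointwise

/-- `u` converges to the identity in the group topology `t`. -/
def TendstoOne {G : Type*} [Group G] (t : GroupTopology G) (u : ℕ → G) : Prop :=
  Filter.Tendsto u Filter.atTop (@nhds G t.toTopologicalSpace 1)

/-- The group topology `t` is Hausdorff. -/
def IsHausdorffGT {G : Type*} [Group G] (t : GroupTopology G) : Prop :=
  @T2Space G t.toTopologicalSpace

/-- `S` is a `T_s`-set of sequences: some Hausdorff group topology makes every
sequence of `S` converge to the identity. -/
def IsTsSet {G : Type*} [Group G] (S : Set (ℕ → G)) : Prop :=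
  ∃ t : GroupTopology G, IsHausdorffGT t ∧ ∀ u ∈ S, TendstoOne t u

/-- `τ` is the finest Hausdorff group topology on `G` in which every sequence of `S`
converges to the identity (recall that in Mathlib's order on topologies, finer = smaller). -/
def IsTauS {G : Type*} [Group G] (S : Set (ℕ → G)) (τ : GroupTopology G) : Prop :=
  IsHausdorffGT τ ∧ (∀ u ∈ S, TendstoOne τ u) ∧
    ∀ t : GroupTopology G, IsHausdorffGT t → (∀ u ∈ S, TendstoOne t u) → τ ≤ t

/-- The given topological-group structure on `G`, as a term of `GroupTopology G`. -/
def ambientGT (G : Type*) [Group G] [τ : TopologicalSpace G] [h : IsTopologicalGroup G] :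
    GroupTopology G := ⟨τ, h⟩

/-- The set of all sequences converging to the identity in a group topology. -/
def SeqConvOne {G : Type*} [Group G] (t : GroupTopology G) : Set (ℕ → G) :=
  {u | TendstoOne t u}

/-- `(G, τ)` is an `s`-group: its topology is the finest Hausdorff group topology in which
every member of some `T_s`-set of sequences converges to the identity. -/
def IsSGroup (G : Type*) [Group G] [TopologicalSpace G] [IsTopologicalGroup G] [T2Space G] :
    Prop :=
  ∃ S : Set (ℕ → G), IsTauS S (ambientGT G)

/-! `(G, τ)` is an `s`-group iff `τ` is finer than every Hausdorff group topology in which all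
`τ`-null sequences are null (take for `S` all `τ`-null sequences).
If `t` is such a topology on `G`, then `t × τ_H` is one on `G × H`, so `τ_G × τ_H ≤ t × τ_H` and
`τ_G ≤ t`. Conversely, such a topology `t` on `G × H` induces such topologies on the factors
along the inclusions, and their product is finer than `t`, because `(g, h) = (g, 1) * (1, h)`. -/

theorem TopologicalSpace.prod_le_prod_iff {α β : Type*} [Nonempty α] [Nonempty β]
    {σ₁ σ₂ : TopologicalSpace α} {τ₁ τ₂ : TopologicalSpace β} :
    @instTopologicalSpaceProd α β σ₁ τ₁ ≤ @instTopologicalSpaceProd α β σ₂ τ₂ ↔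
      σ₁ ≤ σ₂ ∧ τ₁ ≤ τ₂ := by
  refine ⟨fun h => ⟨?_, ?_⟩, fun h => prod_mono h.1 h.2⟩
  · obtain ⟨b⟩ := ‹Nonempty β›
    convert induced_mono (g := fun a : α => (a, b)) h
    · let := σ₁; let := τ₁; exact (isInducing_prodMkLeft b).eq_induced
    · let := σ₂; let := τ₂; exact (isInducing_prodMkLeft b).eq_induced
  · obtain ⟨a⟩ := ‹Nonempty α›
    convert induced_mono (g := fun b : β => (a, b)) h
    · let := σ₁; let := τ₁; exact (isInducing_prodMkRight a).eq_induced
    · let := σ₂; let := τ₂; exact (isInducing_prodMkRight a).eq_induced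

theorem continuous_mul_of_prod_induced {X Y M : Type*} [TopologicalSpace M] [Mul M]
    [ContinuousMul M] (f : X → M) (g : Y → M) :
    @Continuous (X × Y) M (@instTopologicalSpaceProd X Y (.induced f ‹_›) (.induced g ‹_›)) _
      (fun p => f p.1 * g p.2) :=
  letI := TopologicalSpace.induced f ‹TopologicalSpace M›
  letI := TopologicalSpace.induced g ‹TopologicalSpace M›
  (continuous_induced_dom.comp continuous_fst).mul (continuous_induced_dom.comp continuous_snd)

namespace GroupTopology

variable {G H : Type*} [Group G] [Group H]

def prod (t : GroupTopology G) (s : GroupTopology H) : GroupTopology (G × H) :=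
  letI := t.toTopologicalSpace
  letI := s.toTopologicalSpace
  haveI := t.toIsTopologicalGroup
  haveI := s.toIsTopologicalGroup
  ⟨instTopologicalSpaceProd, inferInstance⟩

def induced (f : G →* H) (t : GroupTopology H) : GroupTopology G :=
  letI := t.toTopologicalSpace
  haveI := t.toIsTopologicalGroup
  ⟨TopologicalSpace.induced f t.toTopologicalSpace, topologicalGroup_induced f⟩

theorem prod_le_prod_iff {t₁ t₂ : GroupTopology G} {s₁ s₂ : GroupTopology H} :
    t₁.prod s₁ ≤ t₂.prod s₂ ↔ t₁ ≤ t₂ ∧ s₁ ≤ s₂ := by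
  simp only [← toTopologicalSpace_le]
  exact TopologicalSpace.prod_le_prod_iff

theorem prod_induced_inl_inr_le (t : GroupTopology (G × H)) :
    (t.induced (MonoidHom.inl G H)).prod (t.induced (MonoidHom.inr G H)) ≤ t := by
  have := t.toIsTopologicalGroup
  have hid : (fun p : G × H => MonoidHom.inl G H p.1 * MonoidHom.inr G H p.2) = id := by
    ext p <;> simp
  rw [← toTopologicalSpace_le, ← continuous_id_iff_le, ← hid]
  exact @continuous_mul_of_prod_induced _ _ _ t.toTopologicalSpace _ _ _ _

theorem isHausdorffGT_prod {t : GroupTopology G} {s : GroupTopology H} (ht : IsHausdorffGT t)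
    (hs : IsHausdorffGT s) : IsHausdorffGT (t.prod s) :=
  @Prod.t2Space G H t.toTopologicalSpace ht s.toTopologicalSpace hs

theorem isHausdorffGT_induced {f : G →* H} (hf : Function.Injective f) {t : GroupTopology H}
    (ht : IsHausdorffGT t) : IsHausdorffGT (t.induced f) :=
  let := t.toTopologicalSpace
  have : T2Space H := ht
  let : TopologicalSpace G := .induced f t.toTopologicalSpace
  Topology.IsEmbedding.t2Space ⟨⟨rfl⟩, hf⟩

theorem tendstoOne_prod_iff {t : GroupTopology G} {s : GroupTopology H} {u : ℕ → G × H} :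
    TendstoOne (t.prod s) u ↔ TendstoOne t (Prod.fst ∘ u) ∧ TendstoOne s (Prod.snd ∘ u) :=
  @Prod.tendsto_iff G H t.toTopologicalSpace s.toTopologicalSpace ℕ u atTop 1

theorem tendstoOne_induced_iff {f : G →* H} {t : GroupTopology H} {u : ℕ → G} :
    TendstoOne (t.induced f) u ↔ TendstoOne t (f ∘ u) := by
  let := t.toTopologicalSpace
  show Tendsto u atTop (@nhds G (.induced f t.toTopologicalSpace) 1) ↔ _
  rw [nhds_induced, map_one, tendsto_comap_iff]
  rfl

theorem tendstoOne_const_one (t : GroupTopology G) : TendstoOne t fun _ => 1 :=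
  let := t.toTopologicalSpace; tendsto_const_nhds

theorem seqConvOne_prod_mono {t₁ t₂ : GroupTopology G} {s₁ s₂ : GroupTopology H}
    (ht : SeqConvOne t₁ ⊆ SeqConvOne t₂) (hs : SeqConvOne s₁ ⊆ SeqConvOne s₂) :
    SeqConvOne (t₁.prod s₁) ⊆ SeqConvOne (t₂.prod s₂) := fun _ hu =>
  tendstoOne_prod_iff.2 ⟨ht (tendstoOne_prod_iff.1 hu).1, hs (tendstoOne_prod_iff.1 hu).2⟩

theorem mapsTo_seqConvOne_inl (t : GroupTopology G) (s : GroupTopology H) :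
    Set.MapsTo (MonoidHom.inl G H ∘ ·) (SeqConvOne t) (SeqConvOne (t.prod s)) := fun _ hu =>
  tendstoOne_prod_iff.2 ⟨hu, tendstoOne_const_one s⟩

theorem mapsTo_seqConvOne_inr (t : GroupTopology G) (s : GroupTopology H) :
    Set.MapsTo (MonoidHom.inr G H ∘ ·) (SeqConvOne s) (SeqConvOne (t.prod s)) := fun _ hu =>
  tendstoOne_prod_iff.2 ⟨tendstoOne_const_one t, hu⟩

end GroupTopology

open GroupTopology

theorem ambientGT_prod (G H : Type*) [Group G] [TopologicalSpace G] [IsTopologicalGroup G]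
    [Group H] [TopologicalSpace H] [IsTopologicalGroup H] :
    ambientGT (G × H) = (ambientGT G).prod (ambientGT H) := rfl

theorem isSGroup_iff_forall_le {G : Type*} [Group G] [TopologicalSpace G] [IsTopologicalGroup G]
    [T2Space G] :
    IsSGroup G ↔ ∀ t : GroupTopology G, IsHausdorffGT t →
      SeqConvOne (ambientGT G) ⊆ SeqConvOne t → ambientGT G ≤ t :=
  ⟨fun ⟨_, _, hS, hmin⟩ t ht hnull => hmin t ht fun u hu => hnull (hS u hu),
    fun h => ⟨SeqConvOne (ambientGT G), ‹T2Space G›, fun _ hu => hu, h⟩⟩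

/-- the product of two Hausdorff topological groups is an `s`-group iff both
factors are `s`-groups. -/
theorem stmt9 {G H : Type*} [Group G] [TopologicalSpace G] [IsTopologicalGroup G] [T2Space G]
    [Group H] [TopologicalSpace H] [IsTopologicalGroup H] [T2Space H] :
    IsSGroup (G × H) ↔ IsSGroup G ∧ IsSGroup H := by
  simp only [isSGroup_iff_forall_le, ambientGT_prod]
  constructor
  · intro h
    refine ⟨fun t ht hnull => ?_, fun s hs hnull => ?_⟩
    · exact (prod_le_prod_iff.1 <| h (t.prod (ambientGT H)) (isHausdorffGT_prod ht ‹_›)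
        (seqConvOne_prod_mono hnull subset_rfl)).1
    · exact (prod_le_prod_iff.1 <| h ((ambientGT G).prod s) (isHausdorffGT_prod ‹_› hs)
        (seqConvOne_prod_mono subset_rfl hnull)).2
  · rintro ⟨hG, hH⟩ t ht hnull
    have hleG : ambientGT G ≤ t.induced (.inl G H) :=
      hG _ (isHausdorffGT_induced (Prod.mk_left_injective 1) ht) fun _ hu =>
        tendstoOne_induced_iff.2 (hnull (mapsTo_seqConvOne_inl _ (ambientGT H) hu))
    have hleH : ambientGT H ≤ t.induced (.inr G H) :=
      hH _ (isHausdorffGT_induced (Prod.mk_right_injective 1) ht) fun _ hu =>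
        tendstoOne_induced_iff.2 (hnull (mapsTo_seqConvOne_inr (ambientGT G) _ hu))
    calc (ambientGT G).prod (ambientGT H)
      _ ≤ (t.induced (.inl G H)).prod (t.induced (.inr G H)) := prod_le_prod_iff.2 ⟨hleG, hleH⟩
      _ ≤ t := prod_induced_inl_inr_le t
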